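/- arXiv:1908.06713 — 4 statements merged into one kernel-verified Lean document; each statement's English description precedes it below -/
import Mathlib

section
/- Let n ≥ 2, let T ∈ M_{n-1}(ℂ) with T T^* < I_{n-1} (i.e. I_{n-1} − T T^* is positive definite), let u ∈ ℂ^{n-1} and λ ∈ ℂ with |λ| < 1, and let T' ∈ M_n(ℂ) be the block upper-triangular matrix T' = [[T, u],[0, λ]]. Then det(I_n − T' T'^*) = (1 − |λ|²) · det(I_{n-1} − T T^*) · (1 − (1/(1−|λ|²)) · u^* (I_{n-1} − T T^*)^{-1} u). -/
open Matrix
open scoped ComplexOrder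

/-- Recursive decomposition of `det (I - T' T'^*)` for a block upper-triangular
matrix `T' = [[T, u], [0, λ]]` with `T T^* < I` and `|λ| < 1`
(truncated unitary ensemble case). -/
theorem det_one_sub_blockTriangular_mul_conjTranspose
    (n : ℕ) (hn : 1 ≤ n) (T : Matrix (Fin n) (Fin n) ℂ)
    (hT : (1 - T * Tᴴ).PosDef) (u : Fin n → ℂ) (l : ℂ) (hl : ‖l‖ < 1)
    (T' : Matrix (Fin n ⊕ Fin 1) (Fin n ⊕ Fin 1) ℂ)
    (hT' : T' = Matrix.fromBlocks T (Matrix.of fun i (_ : Fin 1) => u i) 0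
      (Matrix.of fun (_ : Fin 1) (_ : Fin 1) => l)) :
    Matrix.det (1 - T' * T'ᴴ)
      = ((1 - ‖l‖ ^ 2 : ℝ) : ℂ) * Matrix.det (1 - T * Tᴴ)
        * (1 - (((1 - ‖l‖ ^ 2 : ℝ) : ℂ))⁻¹ * (star u ⬝ᵥ ((1 - T * Tᴴ)⁻¹ *ᵥ u))) := by
  set c : ℂ := ((1 - ‖l‖ ^ 2 : ℝ) : ℂ) with hc
  have hc0 : c ≠ 0 := by
    simp only [hc, ne_eq, Complex.ofReal_eq_zero]
    nlinarith [norm_nonneg l]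
  -- Block decomposition of 1 - T' T'ᴴ
  have hll : l * star l = ((‖l‖ ^ 2 : ℝ) : ℂ) := by
    rw [show (star l : ℂ) = (starRingEnd ℂ) l from rfl, Complex.mul_conj']
    norm_cast
  -- block form
  have h1 : 1 - T' * T'ᴴ =
      Matrix.fromBlocks
        (1 - T * Tᴴ - Matrix.replicateCol (Fin 1) u * Matrix.replicateRow (Fin 1) (star u))
        (Matrix.replicateCol (Fin 1) ((-star l) • u))
        (Matrix.replicateRow (Fin 1) ((-l) • star u))
        (Matrix.of fun _ _ => c) := by
    subst hT'
    rw [fromBlocks_conjTranspose, fromBlocks_multiply, ← fromBlocks_one, sub_eq_add_neg,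
      fromBlocks_neg, fromBlocks_add]
    ext i j
    rcases i with i | i <;> rcases j with j | j <;>
      simp [fromBlocks, Matrix.mul_apply, Fin.sum_univ_one, Matrix.replicateCol, Matrix.replicateRow,
        Matrix.one_apply, hc, sub_eq_add_neg]
    all_goals try ring
    rw [if_pos (Subsingleton.elim i j), show l * (starRingEnd ℂ) l = _ from hll]
    push_cast
    ring
  have hM : IsUnit (1 - T * Tᴴ).det := hT.det_pos.ne'.isUnit
  set M : Matrix (Fin n) (Fin n) ℂ := 1 - T * Tᴴ with hMdef
  haveI : Invertible (Matrix.of fun (_ : Fin 1) (_ : Fin 1) => c) :=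
    ⟨Matrix.of fun _ _ => c⁻¹,
      by ext i j
         simp [Matrix.mul_apply, Fin.sum_univ_one, Matrix.one_apply,
           Subsingleton.elim i j, inv_mul_cancel₀ hc0],
      by ext i j
         simp [Matrix.mul_apply, Fin.sum_univ_one, Matrix.one_apply,
           Subsingleton.elim i j, mul_inv_cancel₀ hc0]⟩
  have hE : ⅟(Matrix.of fun (_ : Fin 1) (_ : Fin 1) => c)
      = Matrix.of fun _ _ => c⁻¹ := invOf_eq_right_inv (by
        ext i j
        simp [Matrix.mul_apply, Fin.sum_univ_one, Matrix.one_apply,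
          Subsingleton.elim i j, mul_inv_cancel₀ hc0])
  rw [h1, Matrix.det_fromBlocks₂₂, hE]
  have hsum : c + ((‖l‖ ^ 2 : ℝ) : ℂ) = 1 := by rw [hc]; push_cast; ring
  have hcc : (1 : ℂ) + ((‖l‖ ^ 2 : ℝ) : ℂ) * c⁻¹ = c⁻¹ := by
    field_simp
    rw [hc]
    push_cast
    ring
  have h2 : M - Matrix.replicateCol (Fin 1) u * Matrix.replicateRow (Fin 1) (star u)
        - Matrix.replicateCol (Fin 1) ((-star l) • u) * (Matrix.of fun _ _ => c⁻¹ : Matrix (Fin 1) (Fin 1) ℂ)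
          * Matrix.replicateRow (Fin 1) ((-l) • star u)
      = M + Matrix.replicateCol (Fin 1) ((-c⁻¹) • u) * Matrix.replicateRow (Fin 1) (star u) := by
    ext i j
    have key : (1 : ℂ) + (l * star l) * c⁻¹ = c⁻¹ := by rw [hll]; exact hcc
    simp only [Matrix.sub_apply, Matrix.add_apply, Matrix.mul_apply, Fin.sum_univ_one,
      Matrix.replicateCol_apply, Matrix.replicateRow_apply, Matrix.of_apply, Pi.smul_apply, Pi.star_apply,
      smul_eq_mul]
    have : u i * star (u j) + -star l * u i * c⁻¹ * (-l * star (u j))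
        = ((1 : ℂ) + (l * star l) * c⁻¹) * (u i * star (u j)) := by ring
    calc M i j - u i * star (u j) - -star l * u i * c⁻¹ * (-l * star (u j))
        = M i j - (u i * star (u j) + -star l * u i * c⁻¹ * (-l * star (u j))) := by ring
      _ = M i j - ((1 : ℂ) + (l * star l) * c⁻¹) * (u i * star (u j)) := by rw [this]
      _ = M i j + -c⁻¹ * u i * star (u j) := by rw [key]; ring
  rw [h2]; erw [Matrix.det_add_replicateCol_mul_replicateRow (ι := Fin 1) hM ((-c⁻¹) • u) (star u)]
  have hdetc : (Matrix.of fun (_ : Fin 1) (_ : Fin 1) => c).det = c := by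
    rw [Matrix.det_fin_one]; rfl
  rw [hdetc, ← mul_assoc]
  congr 1
  have h3 : (1 + Matrix.replicateRow (Fin 1) (star u) * M⁻¹ * Matrix.replicateCol (Fin 1) ((-c⁻¹) • u)).det
      = 1 - c⁻¹ * (star u ⬝ᵥ (M⁻¹ *ᵥ u)) := by
    rw [Matrix.det_fin_one]
    simp only [Matrix.add_apply, Matrix.one_apply_eq, Matrix.mul_apply, Fin.sum_univ_one,
      Matrix.replicateCol_apply, Matrix.replicateRow_apply, Pi.smul_apply, smul_eq_mul, dotProduct,
      Matrix.mulVec, Pi.star_apply]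
    simp only [Finset.sum_mul, Finset.mul_sum]
    rw [Finset.sum_comm, sub_eq_add_neg, ← Finset.sum_neg_distrib]
    congr 1
    refine Finset.sum_congr rfl fun k _ => ?_
    rw [← Finset.sum_neg_distrib]
    refine Finset.sum_congr rfl fun j _ => ?_
    ring
  exact h3
end

section
/- Let (u^{(m)}_{k,n}), indexed by m ∈ ℕ, n ≥ 1 and 1 ≤ k ≤ n, be a countable family of nonnegative real numbers such that for every fixed m ≥ 0 and k ≥ 1, u^{(m)}_{k,n} → 0 as n → ∞. Then there exists a sequence of integers (k_n)_{n ≥ 1} with 1 ≤ k_n ≤ n for all n and k_n → ∞ as n → ∞, such that for every m ∈ ℕ, the partial sums ∑_{i=1}^{k_n} u^{(m)}_{i,n} → 0 as n → ∞. -/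
open Filter

/-- Given a countable family of double-indexed nonnegative sequences each tending to `0`,
there is a single sequence `k n → ∞` with `1 ≤ k n ≤ n` along which all the partial sums
`∑_{i=1}^{k n} u m i n` tend to `0`. -/
theorem exists_sequence_partial_sums_tendsto_zero
    (u : ℕ → ℕ → ℕ → ℝ)
    (hnonneg : ∀ m k n, 1 ≤ k → k ≤ n → 0 ≤ u m k n)
    (hlim : ∀ m k, 1 ≤ k → Tendsto (fun n => u m k n) atTop (nhds 0)) :
    ∃ kseq : ℕ → ℕ,
      (∀ n, 1 ≤ n → 1 ≤ kseq n ∧ kseq n ≤ n) ∧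
      Tendsto kseq atTop atTop ∧
      ∀ m, Tendsto (fun n => ∑ i ∈ Finset.Icc 1 (kseq n), u m i n) atTop (nhds 0) := by
  classical
  set S : ℕ → ℕ → ℝ :=
    fun j n => ∑ m ∈ Finset.range (j + 1), ∑ i ∈ Finset.Icc 1 j, u m i n with hSdef
  have hStend : ∀ j, Tendsto (fun n => S j n) atTop (nhds 0) := by
    intro j
    have h : Tendsto (fun n => ∑ m ∈ Finset.range (j + 1), ∑ i ∈ Finset.Icc 1 j, u m i n)
        atTop (nhds (∑ m ∈ Finset.range (j + 1), ∑ i ∈ Finset.Icc 1 j, (0 : ℝ))) := by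
      apply tendsto_finset_sum
      intro m _
      apply tendsto_finset_sum
      intro i hi
      exact hlim m i (Finset.mem_Icc.mp hi).1
    simpa using h
  have hNex : ∀ j : ℕ, ∃ N : ℕ, ∀ n ≥ N, S j n < 1 / (j + 1) := by
    intro j
    have hpos : (0 : ℝ) < 1 / (j + 1) := by positivity
    have := (hStend j).eventually_lt_const hpos
    exact eventually_atTop.mp this
  choose M hM using hNex
  set N : ℕ → ℕ := fun j => max (M j) j with hNdef
  have hNj : ∀ j, j ≤ N j := fun j => le_max_right _ _
  have hNS : ∀ j n, N j ≤ n → S j n < 1 / (j + 1) := by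
    intro j n hn
    exact hM j n (le_trans (le_max_left _ _) hn)
  set kseq : ℕ → ℕ := fun n => max 1 (Nat.findGreatest (fun j => N j ≤ n) n) with hkdef
  have hk_le : ∀ n, 1 ≤ n → 1 ≤ kseq n ∧ kseq n ≤ n := by
    intro n hn
    refine ⟨le_max_left _ _, ?_⟩
    exact max_le hn (Nat.findGreatest_le n)
  have hk_ge : ∀ J n, N J ≤ n → J ≤ kseq n := by
    intro J n hn
    have hJn : J ≤ n := le_trans (hNj J) hn
    have h2 := Nat.le_findGreatest (P := fun j => N j ≤ n) hJn hn
    exact le_trans h2 (le_max_right 1 _)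
  refine ⟨kseq, hk_le, ?_, ?_⟩
  · rw [tendsto_atTop]
    intro b
    filter_upwards [eventually_ge_atTop (N b)] with n hn
    exact hk_ge b n hn
  · intro m
    rw [NormedAddCommGroup.tendsto_nhds_zero]
    intro ε hε
    obtain ⟨J₀, hJ₀⟩ := exists_nat_one_div_lt hε
    set J : ℕ := max J₀ (max m 1) with hJdef
    have hJm : m ≤ J := le_trans (le_max_left _ _) (le_max_right _ _)
    have hJ1 : 1 ≤ J := le_trans (le_max_right _ _) (le_max_right _ _)
    have hJε : 1 / (J + 1 : ℝ) < ε := by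
      refine lt_of_le_of_lt ?_ hJ₀
      apply one_div_le_one_div_of_le (by positivity)
      have : (J₀ : ℝ) ≤ J := by exact_mod_cast le_max_left _ _
      linarith
    filter_upwards [eventually_ge_atTop (N J), eventually_ge_atTop 1] with n hn hn1
    set j : ℕ := kseq n with hjdef
    have hJj : J ≤ j := hk_ge J n hn
    have hj1 : 1 ≤ j := le_trans hJ1 hJj
    have hjn : j ≤ n := (hk_le n hn1).2
    have hfg_ge : 1 ≤ Nat.findGreatest (fun j => N j ≤ n) n :=
      le_trans hJ1 (Nat.le_findGreatest (P := fun j => N j ≤ n) (le_trans (hNj J) hn) hn)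
    have hfg : Nat.findGreatest (fun j => N j ≤ n) n = j := by
      simp only [hjdef, hkdef]
      omega
    have hNjn : N j ≤ n := by
      rw [← hfg]
      exact Nat.findGreatest_spec (P := fun j => N j ≤ n) (m := J) (le_trans (hNj J) hn) hn
    have hSmall : S j n < 1 / (j + 1) := hNS j n hNjn
    have hsum_le : ∑ i ∈ Finset.Icc 1 j, u m i n ≤ S j n := by
      rw [hSdef]
      apply Finset.single_le_sum (f := fun m' => ∑ i ∈ Finset.Icc 1 j, u m' i n)
      · intro m' _
        apply Finset.sum_nonneg
        intro i hi
        obtain ⟨hi1, hi2⟩ := Finset.mem_Icc.mp hi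
        exact hnonneg m' i n hi1 (le_trans hi2 hjn)
      · exact Finset.mem_range.mpr (by omega)
    have hsum_nonneg : 0 ≤ ∑ i ∈ Finset.Icc 1 j, u m i n := by
      apply Finset.sum_nonneg
      intro i hi
      obtain ⟨hi1, hi2⟩ := Finset.mem_Icc.mp hi
      exact hnonneg m i n hi1 (le_trans hi2 hjn)
    have hmono : 1 / ((j : ℝ) + 1) ≤ 1 / ((J : ℝ) + 1) := by
      apply one_div_le_one_div_of_le (by positivity)
      have : (J : ℝ) ≤ j := by exact_mod_cast hJj
      linarith
    rw [Real.norm_eq_abs, abs_of_nonneg hsum_nonneg]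
    calc ∑ i ∈ Finset.Icc 1 j, u m i n ≤ S j n := hsum_le
      _ < 1 / (j + 1) := hSmall
      _ ≤ 1 / (J + 1) := hmono
      _ < ε := hJε
end

section
/- For every integer N ≥ 2, ∏_{k=2}^{N} [ ∫_0^∞ (1 + 1/N + 1/(N t)) · t^{k-1} (1+t)^{-(N+1)} dt / ∫_0^∞ t^{k-1} (1+t)^{-(N+1)} dt ] = N. Equivalently: if G_2, …, G_N are independent real random variables where G_k has density t^{k-1}(1+t)^{-(N+1)} / B(N+1−k, k) on (0,∞), then E[ ∏_{k=2}^{N} (1 + (1+G_k)/(N G_k)) ] = N. -/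
open MeasureTheory Set Filter

/-- Derivative of `t^m / (1+t)^M` for `m, M ≥ 1`. -/
lemma hasDerivAt_aux (m M : ℕ) (hm : 1 ≤ m) (hM : 1 ≤ M) (x : ℝ) (hx : 0 ≤ x) :
    HasDerivAt (fun t : ℝ => t ^ m / (1 + t) ^ M)
      (((m : ℝ) * x ^ (m - 1) * (1 + x) - M * x ^ m) / (1 + x) ^ (M + 1)) x := by
  obtain ⟨m, rfl⟩ : ∃ m', m = m' + 1 := ⟨m - 1, (Nat.succ_pred_eq_of_pos hm).symm⟩
  obtain ⟨M, rfl⟩ : ∃ M', M = M' + 1 := ⟨M - 1, (Nat.succ_pred_eq_of_pos hM).symm⟩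
  have hu : (0:ℝ) < 1 + x := by linarith
  have h1 : HasDerivAt (fun t : ℝ => t ^ (m + 1)) ((↑(m+1)) * x ^ m) x := by
    simpa using hasDerivAt_pow (m+1) x
  have h2 : HasDerivAt (fun t : ℝ => (1 + t) ^ (M + 1))
      ((↑(M+1)) * (1 + x) ^ M * 1) x := by
    exact ((hasDerivAt_id x).const_add 1).pow (M+1) |>.congr_deriv (by simp)
  have hne : ((1 + x) ^ (M + 1) : ℝ) ≠ 0 := pow_ne_zero _ (ne_of_gt hu)
  have := h1.div h2 hne
  refine this.congr_deriv ?_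
  have hune : (1 + x : ℝ) ≠ 0 := ne_of_gt hu
  simp only [Nat.add_sub_cancel]
  field_simp
  ring

lemma tendsto_aux (m M : ℕ) (h : m < M) :
    Tendsto (fun t : ℝ => t ^ m / (1 + t) ^ M) atTop (nhds 0) := by
  apply squeeze_zero' (g := fun t : ℝ => (t ^ (M - m))⁻¹)
  · filter_upwards [eventually_ge_atTop (0:ℝ)] with t ht
    positivity
  · filter_upwards [eventually_ge_atTop (1:ℝ)] with t ht
    have ht0 : (0:ℝ) < t := by linarith
    have h1 : t ^ m / (1 + t) ^ M ≤ t ^ m / t ^ M := by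
      apply div_le_div_of_nonneg_left (by positivity) (by positivity)
      exact pow_le_pow_left₀ (le_of_lt ht0) (by linarith) M
    have h2 : t ^ m / t ^ M = (t ^ (M - m))⁻¹ := by
      have hMm : t ^ M = t ^ m * t ^ (M - m) := by
        rw [← pow_add, Nat.add_sub_cancel' h.le]
      rw [hMm]
      field_simp
    linarith [h1, h2.le, h2.ge]
  · exact (tendsto_pow_atTop (by omega : M - m ≠ 0)).inv_tendsto_atTop

lemma tendsto_one_aux (m : ℕ) :
    Tendsto (fun t : ℝ => t ^ m / (1 + t) ^ m) atTop (nhds 1) := by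
  have h : Tendsto (fun t : ℝ => (1 - (1 + t)⁻¹) ^ m) atTop (nhds 1) := by
    have ha : Tendsto (fun t : ℝ => 1 + t) atTop atTop :=
      tendsto_atTop_add_const_left atTop (1:ℝ) tendsto_id
    have hb : Tendsto (fun t : ℝ => (1 + t)⁻¹) atTop (nhds 0) := ha.inv_tendsto_atTop
    have hc : Tendsto (fun t : ℝ => 1 - (1 + t)⁻¹) atTop (nhds 1) := by
      simpa using hb.const_sub 1
    simpa using hc.pow m
  apply h.congr'
  filter_upwards [eventually_ge_atTop (0:ℝ)] with t ht
  have h1 : (1 + t : ℝ) ≠ 0 := by positivity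
  have h2 : 1 - (1 + t)⁻¹ = t / (1 + t) := by field_simp; ring
  rw [h2, div_pow]

lemma integrableOn_aux (m M : ℕ) (h : m + 2 ≤ M) :
    IntegrableOn (fun t : ℝ => t ^ m / (1 + t) ^ M) (Ioi (0:ℝ)) := by
  set D : ℝ → ℝ := fun x =>
    ((↑(m+1) : ℝ) * x ^ (m + 1 - 1) * (1 + x) - ↑(m+1) * x ^ (m+1)) / (1 + x) ^ (m + 1 + 1) with hD
  have hDint : IntegrableOn D (Ioi (0:ℝ)) := by
    apply integrableOn_Ioi_deriv_of_nonneg' (g := fun t : ℝ => t ^ (m+1) / (1 + t) ^ (m+1))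
      (l := 1)
    · intro x hx
      exact hasDerivAt_aux (m+1) (m+1) (by omega) (by omega) x hx
    · intro x hx
      have hx0 : (0:ℝ) < x := hx
      have : D x = (↑(m+1) : ℝ) * x ^ m / (1 + x) ^ (m + 2) := by
        simp only [hD, Nat.add_sub_cancel]
        ring
      rw [this]; positivity
    · exact tendsto_one_aux (m+1)
  apply hDint.mono' (μ := volume.restrict (Ioi (0:ℝ)))
  · apply ContinuousOn.aestronglyMeasurable _ measurableSet_Ioi
    apply ContinuousOn.div (by fun_prop) (by fun_prop)
    intro x hx
    have hx0 : (0:ℝ) < x := hx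
    positivity
  · rw [ae_restrict_iff' measurableSet_Ioi]
    filter_upwards with x hx
    have hx0 : (0:ℝ) < x := hx
    have hDx : D x = (↑(m+1) : ℝ) * x ^ m / (1 + x) ^ (m + 2) := by
      simp only [hD, Nat.add_sub_cancel]; ring
    rw [hDx, Real.norm_eq_abs, abs_of_nonneg (by positivity)]
    have h1 : x ^ m / (1 + x) ^ M ≤ x ^ m / (1 + x) ^ (m + 2) := by
      apply div_le_div_of_nonneg_left (by positivity) (by positivity)
      exact pow_le_pow_right₀ (by linarith) h
    have h2 : x ^ m / (1 + x) ^ (m + 2) ≤ (↑(m+1) : ℝ) * x ^ m / (1 + x) ^ (m + 2) := by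
      have hc : (1:ℝ) ≤ (↑(m+1) : ℝ) := by exact_mod_cast Nat.one_le_iff_ne_zero.mpr (Nat.succ_ne_zero m)
      gcongr
      nlinarith [pow_nonneg hx0.le m]
    linarith

lemma key_relation (m M : ℕ) (hm : 1 ≤ m) (hM : m + 1 ≤ M) :
    (m : ℝ) * ∫ t in Ioi (0:ℝ), t ^ (m - 1) / (1 + t) ^ (M + 1)
      = ((M : ℝ) - m) * ∫ t in Ioi (0:ℝ), t ^ m / (1 + t) ^ (M + 1) := by
  obtain ⟨m, rfl⟩ : ∃ m', m = m' + 1 := ⟨m - 1, (Nat.succ_pred_eq_of_pos hm).symm⟩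
  simp only [Nat.add_sub_cancel]
  set g' : ℝ → ℝ := fun x =>
    ((↑(m+1) : ℝ) * x ^ (m + 1 - 1) * (1 + x) - ↑M * x ^ (m+1)) / (1 + x) ^ (M + 1) with hg'
  have hgeq : g' = fun x => (↑(m+1) : ℝ) * (x ^ m / (1 + x) ^ (M + 1))
      - ((M : ℝ) - ↑(m+1)) * (x ^ (m+1) / (1 + x) ^ (M + 1)) := by
    funext x
    simp only [hg', Nat.add_sub_cancel]
    ring
  have hint1 : IntegrableOn (fun t : ℝ => t ^ m / (1 + t) ^ (M + 1)) (Ioi (0:ℝ)) :=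
    integrableOn_aux m (M+1) (by omega)
  have hint2 : IntegrableOn (fun t : ℝ => t ^ (m+1) / (1 + t) ^ (M + 1)) (Ioi (0:ℝ)) :=
    integrableOn_aux (m+1) (M+1) (by omega)
  have hgint : IntegrableOn g' (Ioi (0:ℝ)) := by
    rw [hgeq]
    exact (hint1.const_mul _).sub (hint2.const_mul _)
  have hFTC : ∫ x in Ioi (0:ℝ), g' x = 0 - (0:ℝ) ^ (m+1) / (1 + (0:ℝ)) ^ M := by
    apply integral_Ioi_of_hasDerivAt_of_tendsto' (f := fun t : ℝ => t ^ (m+1) / (1 + t) ^ M)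
    · intro x hx
      exact hasDerivAt_aux (m+1) M (by omega) (by omega) x hx
    · exact hgint
    · exact tendsto_aux (m+1) M (by omega)
  rw [hgeq] at hFTC
  rw [integral_sub (hint1.const_mul _) (hint2.const_mul _), integral_const_mul,
    integral_const_mul] at hFTC
  simp only [zero_pow (Nat.succ_ne_zero m), zero_div, sub_zero] at hFTC
  push_cast at hFTC ⊢
  linarith

lemma integral_pos_aux (m M : ℕ) (h : m + 2 ≤ M) :
    0 < ∫ t in Ioi (0:ℝ), t ^ m / (1 + t) ^ M := by
  rw [setIntegral_pos_iff_support_of_nonneg_ae]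
  · have hsub : Ioi (0:ℝ) ⊆ Function.support (fun t : ℝ => t ^ m / (1 + t) ^ M) ∩ Ioi 0 := by
      intro x hx
      have hx0 : (0:ℝ) < x := hx
      refine ⟨?_, hx⟩
      simp only [Function.mem_support]
      positivity
    calc (0:ENNReal) < volume (Ioi (0:ℝ)) := by simp
      _ ≤ _ := measure_mono hsub
  · filter_upwards [ae_restrict_mem measurableSet_Ioi] with x hx
    have hx0 : (0:ℝ) < x := hx
    positivity
  · exact integrableOn_aux m M h

lemma ratio_aux (N j : ℕ) (hk : j + 2 ≤ N) :
    (∫ t in Ioi (0:ℝ), (1 + 1/(N:ℝ) + 1/(N*t)) * (t ^ (j+1) / (1+t) ^ (N+1)))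
      / ∫ t in Ioi (0:ℝ), t ^ (j+1) / (1+t) ^ (N+1) = ((j:ℝ)+2)/((j:ℝ)+1) := by
  have hN0 : (N:ℝ) ≠ 0 := Nat.cast_ne_zero.mpr (by omega)
  have hint1 : IntegrableOn (fun t : ℝ => t ^ (j+1) / (1 + t) ^ (N + 1)) (Ioi (0:ℝ)) :=
    integrableOn_aux (j+1) (N+1) (by omega)
  have hint0 : IntegrableOn (fun t : ℝ => t ^ j / (1 + t) ^ (N + 1)) (Ioi (0:ℝ)) :=
    integrableOn_aux j (N+1) (by omega)
  have hpos : 0 < ∫ t in Ioi (0:ℝ), t ^ (j+1) / (1+t) ^ (N+1) :=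
    integral_pos_aux (j+1) (N+1) (by omega)
  set I1 := ∫ t in Ioi (0:ℝ), t ^ (j+1) / (1+t) ^ (N+1) with hI1
  set I0 := ∫ t in Ioi (0:ℝ), t ^ j / (1+t) ^ (N+1) with hI0
  have hkey : ((j:ℝ)+1) * I0 = ((N:ℝ) - (j+1)) * I1 := by
    have := key_relation (j+1) N (by omega) (by omega)
    simp only [Nat.add_sub_cancel] at this
    push_cast at this
    convert this using 2 <;> push_cast <;> ring
  have hnum : (∫ t in Ioi (0:ℝ), (1 + 1/(N:ℝ) + 1/(N*t)) * (t ^ (j+1) / (1+t) ^ (N+1)))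
      = (1 + 1/(N:ℝ)) * I1 + (1/(N:ℝ)) * I0 := by
    rw [hI1, hI0, ← integral_const_mul, ← integral_const_mul,
      ← integral_add (hint1.const_mul _) (hint0.const_mul _)]
    apply setIntegral_congr_fun measurableSet_Ioi
    intro t ht
    have ht0 : (0:ℝ) < t := ht
    have h1t : (0:ℝ) < 1 + t := by linarith
    field_simp
    ring
  rw [hnum, div_eq_iff hpos.ne']
  have hj1 : ((j:ℝ)+1) ≠ 0 := by positivity
  have hI0val : I0 = ((N:ℝ) - (j+1)) * I1 / ((j:ℝ)+1) := by
    field_simp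
    linarith [hkey]
  rw [hI0val]
  field_simp
  ring

lemma prod_tel (N : ℕ) (hN : 2 ≤ N) :
    ∏ k ∈ Finset.Icc 2 N, ((k:ℝ)/((k:ℝ)-1)) = N := by
  induction N, hN using Nat.le_induction with
  | base => norm_num
  | succ n hn ih =>
    rw [Finset.prod_Icc_succ_top (by omega), ih]
    have hn0 : (n:ℝ) ≠ 0 := Nat.cast_ne_zero.mpr (by omega)
    push_cast
    have : (n:ℝ) + 1 - 1 = n := by ring
    rw [this]
    field_simp

/-- Conditionally on `λ₁ = 0`, the expected diagonal overlap in the spherical ensemble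
`Sph(N)` equals `N`, expressed via Kostlan's theorem as a product of ratios of integrals
against the generalized gamma densities `t^{k-1}(1+t)^{-(N+1)}`. -/
theorem spherical_expected_overlap_at_origin (N : ℕ) (hN : 2 ≤ N) :
    ∏ k ∈ Finset.Icc 2 N,
        ((∫ t in Ioi (0 : ℝ),
            (1 + 1 / (N : ℝ) + 1 / (N * t)) * (t ^ (k - 1) / (1 + t) ^ (N + 1)))
          / ∫ t in Ioi (0 : ℝ), t ^ (k - 1) / (1 + t) ^ (N + 1))
      = (N : ℝ) := by
  have hcongr : ∏ k ∈ Finset.Icc 2 N,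
        ((∫ t in Ioi (0 : ℝ),
            (1 + 1 / (N : ℝ) + 1 / (N * t)) * (t ^ (k - 1) / (1 + t) ^ (N + 1)))
          / ∫ t in Ioi (0 : ℝ), t ^ (k - 1) / (1 + t) ^ (N + 1))
      = ∏ k ∈ Finset.Icc 2 N, ((k:ℝ)/((k:ℝ)-1)) := by
    apply Finset.prod_congr rfl
    intro k hk
    rw [Finset.mem_Icc] at hk
    obtain ⟨j, rfl⟩ : ∃ j, k = j + 2 := ⟨k - 2, by omega⟩
    have h1 : j + 2 - 1 = j + 1 := rfl
    rw [h1, ratio_aux N j (by omega)]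
    push_cast
    ring_nf
  rw [hcongr, prod_tel N hN]
end

section
/- For all integers M ≥ N ≥ 2, ∏_{k=2}^{N} [ ∫_0^1 (1 − 1/M + 1/(M t)) · t^{k-1} (1−t)^{M-1} dt / ∫_0^1 t^{k-1} (1−t)^{M-1} dt ] = N. Equivalently: if B_2, …, B_N are independent random variables where B_k has the Beta(k, M) density t^{k-1}(1−t)^{M-1} / B(k, M) on (0,1), then E[ ∏_{k=2}^{N} (1 + (1−B_k)/(M B_k)) ] = N. -/
open MeasureTheory Set

lemma prod_fact (a n : ℕ) : (a.factorial : ℂ) * ∏ j ∈ Finset.range n, ((a : ℂ) + 1 + j) = (a + n).factorial := by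
  induction n with
  | zero => simp
  | succ n ih =>
    rw [Finset.prod_range_succ, ← mul_assoc, ih, show a + (n+1) = (a+n) + 1 from rfl,
      Nat.factorial_succ]
    push_cast
    ring

lemma beta_nat (a b : ℕ) :
    ∫ t in Ioo (0 : ℝ) 1, t ^ a * (1 - t) ^ b
      = (a.factorial * b.factorial : ℝ) / (a + b + 1).factorial := by
  have h := Complex.betaIntegral_eval_nat_add_one_right
    (u := (a : ℂ) + 1) (by simp; positivity) b
  rw [Complex.betaIntegral] at h
  have h2 : (∫ x in (0:ℝ)..1, (x : ℂ) ^ ((a : ℂ) + 1 - 1) * ((1 : ℂ) - x) ^ ((b : ℂ) + 1 - 1))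
      = ((∫ t in (0:ℝ)..1, t ^ a * (1 - t) ^ b : ℝ) : ℂ) := by
    rw [← intervalIntegral.integral_ofReal]
    refine intervalIntegral.integral_congr fun x _ => ?_
    push_cast
    rw [add_sub_cancel_right, add_sub_cancel_right, Complex.cpow_natCast, Complex.cpow_natCast]
  rw [h2] at h
  have h3 : ∏ j ∈ Finset.range (b + 1), ((a : ℂ) + 1 + j) = ((a + b + 1).factorial / a.factorial : ℂ) := by
    rw [eq_div_iff (by exact_mod_cast a.factorial_ne_zero), mul_comm]
    have := prod_fact a (b + 1)
    rw [this]
    norm_cast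
  rw [h3] at h
  have h5 : (((a.factorial * b.factorial : ℝ) / (a + b + 1).factorial : ℝ) : ℂ)
      = (b.factorial : ℂ) / ((a + b + 1).factorial / a.factorial : ℂ) := by
    have hfa : (a.factorial : ℂ) ≠ 0 := by exact_mod_cast a.factorial_ne_zero
    have hfc : ((a + b + 1).factorial : ℂ) ≠ 0 := by exact_mod_cast (a+b+1).factorial_ne_zero
    push_cast
    field_simp
  rw [← h5] at h
  have h4 := Complex.ofReal_injective h
  rw [intervalIntegral.integral_of_le zero_le_one, integral_Ioc_eq_integral_Ioo] at h4
  rw [h4]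

lemma intOn (a b : ℕ) :
    IntegrableOn (fun t : ℝ => t ^ a * (1 - t) ^ b) (Ioo 0 1) := by
  exact (((continuous_pow a).mul ((continuous_const.sub continuous_id).pow b)).integrableOn_Ioc).mono_set
    Ioo_subset_Ioc_self

lemma factor (j m : ℕ) :
    (∫ t in Ioo (0:ℝ) 1,
        (1 - 1/((m:ℝ)+2) + 1/(((m:ℝ)+2)*t)) * (t^(j+1) * (1-t)^(m+1)))
      / ∫ t in Ioo (0:ℝ) 1, t^(j+1)*(1-t)^(m+1) = ((j:ℝ)+2)/((j:ℝ)+1) := by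
  have hm : ((m:ℝ)+2) ≠ 0 := by positivity
  have hnum : (∫ t in Ioo (0:ℝ) 1,
        (1 - 1/((m:ℝ)+2) + 1/(((m:ℝ)+2)*t)) * (t^(j+1) * (1-t)^(m+1)))
      = (1 - 1/((m:ℝ)+2)) * (∫ t in Ioo (0:ℝ) 1, t^(j+1)*(1-t)^(m+1))
        + (1/((m:ℝ)+2)) * (∫ t in Ioo (0:ℝ) 1, t^j*(1-t)^(m+1)) := by
    rw [← integral_const_mul, ← integral_const_mul, ← integral_add
      ((intOn (j+1) (m+1)).const_mul _) ((intOn j (m+1)).const_mul _)]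
    refine setIntegral_congr_fun measurableSet_Ioo fun t ht => ?_
    have ht0 : t ≠ 0 := ne_of_gt ht.1
    field_simp
    ring
  rw [hnum]
  simp only [beta_nat]
  have e1 : ((j+1) + (m+1) + 1) = (j + m + 2) + 1 := by ring
  have e2 : (j + (m+1) + 1) = j + m + 2 := by ring
  rw [e1, e2, show (j+1).factorial = (j+1) * j.factorial from Nat.factorial_succ j,
    show ((j+m+2)+1).factorial = (j+m+3) * (j+m+2).factorial from Nat.factorial_succ _]
  have hA : (j.factorial : ℝ) ≠ 0 := by exact_mod_cast j.factorial_ne_zero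
  have hB : ((m+1).factorial : ℝ) ≠ 0 := by exact_mod_cast (m+1).factorial_ne_zero
  have hC : ((j+m+2).factorial : ℝ) ≠ 0 := by exact_mod_cast (j+m+2).factorial_ne_zero
  push_cast
  have hj1 : ((j:ℝ)+1) ≠ 0 := by positivity
  have hjm : ((j:ℝ)+(m:ℝ)+2+1) ≠ 0 := by positivity
  field_simp
  ring

lemma telescope : ∀ N : ℕ, 2 ≤ N → ∏ k ∈ Finset.Icc 2 N, ((k:ℝ)/((k:ℝ)-1)) = N := by
  intro N hN
  induction N, hN using Nat.le_induction with
  | base => norm_num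
  | succ n hn ih =>
    rw [Finset.prod_Icc_succ_top (by omega), ih]
    have hn0 : (n:ℝ) ≠ 0 := by positivity
    push_cast
    field_simp
    rw [add_sub_cancel_right, div_self hn0]

/-- Conditionally on `λ₁ = 0`, the expected diagonal overlap in the truncated unitary
ensemble `TUE(N,M)`, `M ≥ N`, equals `N`, expressed via Kostlan's theorem as a product of
ratios of integrals against the Beta densities `t^{k-1}(1-t)^{M-1}`. -/
theorem tue_expected_overlap_at_origin (N M : ℕ) (hN : 2 ≤ N) (hNM : N ≤ M) :
    ∏ k ∈ Finset.Icc 2 N,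
        ((∫ t in Ioo (0 : ℝ) 1,
            (1 - 1 / (M : ℝ) + 1 / (M * t)) * (t ^ (k - 1) * (1 - t) ^ (M - 1)))
          / ∫ t in Ioo (0 : ℝ) 1, t ^ (k - 1) * (1 - t) ^ (M - 1))
      = (N : ℝ) := by
  have hM : 2 ≤ M := hN.trans hNM
  obtain ⟨m, rfl⟩ : ∃ m, M = m + 2 := ⟨M - 2, by omega⟩
  rw [← telescope N hN]
  refine Finset.prod_congr rfl fun k hk => ?_
  obtain ⟨hk2, hkN⟩ := Finset.mem_Icc.mp hk
  obtain ⟨j, rfl⟩ : ∃ j, k = j + 2 := ⟨k - 2, by omega⟩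
  have h1 : j + 2 - 1 = j + 1 := by omega
  have h2 : m + 2 - 1 = m + 1 := by omega
  have h3 : ((m:ℝ) + 2) = ((m + 2 : ℕ) : ℝ) := by push_cast; ring
  rw [h1, h2, ← h3]
  rw [factor j m]
  push_cast
  ring
end
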